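/- For finite nominal arities X, Y with b ∈ P_X ∩ Y and Z = Y ∘_b X, the inverse bijection K_Z⁻¹ : {1,…,|Z|} → Z satisfies: if K_Y(b) = n and n ≤ m < n + |X|, then K_Z⁻¹(m) = K_X⁻¹(m − n + 1). -/
import Mathlib


/-- A nominal arity: a finite set of ℕ⁺-words pairwise incomparable under the prefix relation. -/
def IsNA (X : Finset (List ℕ+)) : Prop := ∀ a ∈ X, ∀ b ∈ X, a <+: b → a = b

/-- `a` is a prefix of the nominal arity `X`: it is an initial segment of every member. -/
def IsPre (a : List ℕ+) (X : Finset (List ℕ+)) : Prop := ∀ c ∈ X, a <+: c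

/-- Lexicographic order on ℕ⁺-words. -/
def LexLt (a₁ a₂ : List ℕ+) : Prop :=
  ∃ (a b c : List ℕ+) (n m : ℕ+), n < m ∧ a₁ = a ++ [n] ++ b ∧ a₂ = a ++ [m] ++ c

/-- `K X a = |{b ∈ X : b ≺ a}| + 1`. -/
noncomputable def K (X : Finset (List ℕ+)) (a : List ℕ+) : ℕ :=
  {b ∈ (X : Set (List ℕ+)) | LexLt b a}.ncard + 1

lemma same_pos {p : List ℕ+} {n m : ℕ+} {l : List ℕ+}
    (h1 : p ++ [n] <+: l) (h2 : p ++ [m] <+: l) : n = m := by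
  have h := (List.prefix_of_prefix_length_le h1 h2 (by simp)).eq_of_length (by simp)
  simpa using h

lemma eqdec {p q u v : List ℕ+} {n m : ℕ+} (h : p ++ [n] ++ u = q ++ [m] ++ v)
    (hl : p.length = q.length) : p = q ∧ n = m := by
  have h1 : p ++ [n] = q ++ [m] := (List.append_inj h (by simp [hl])).1
  have h2 := List.append_inj h1 hl
  exact ⟨h2.1, by simpa using h2.2⟩

lemma gendec {p q u v : List ℕ+} {n m : ℕ+} (h : p ++ [n] ++ u = q ++ [m] ++ v) :
    (p = q ∧ n = m) ∨ (∃ w, q = p ++ [n] ++ w) ∨ (∃ w, p = q ++ [m] ++ w) := by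
  rcases lt_trichotomy p.length q.length with hlt | heq | hgt
  · right; left
    have h1 : p ++ [n] <+: q := by
      refine List.prefix_of_prefix_length_le (l₃ := p ++ [n] ++ u) ⟨u, rfl⟩ ?_ (by simpa using hlt)
      rw [h]; exact ⟨[m] ++ v, by simp⟩
    obtain ⟨w, hw⟩ := h1
    exact ⟨w, hw.symm⟩
  · exact Or.inl (eqdec h heq)
  · right; right
    have h1 : q ++ [m] <+: p := by
      refine List.prefix_of_prefix_length_le (l₃ := p ++ [n] ++ u) ?_ ⟨[n] ++ u, by simp⟩
        (by simpa using hgt)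
      rw [h]; exact ⟨v, rfl⟩
    obtain ⟨w, hw⟩ := h1
    exact ⟨w, hw.symm⟩

lemma lex_not_prefix {a b : List ℕ+} (h : LexLt a b) : ¬ a <+: b ∧ ¬ b <+: a := by
  obtain ⟨p, u, v, n, m, hnm, rfl, rfl⟩ := h
  constructor
  · intro hp
    exact hnm.ne (same_pos ((List.prefix_append (p ++ [n]) u).trans hp) (List.prefix_append _ _))
  · intro hp
    exact hnm.ne (same_pos (List.prefix_append _ _) ((List.prefix_append (p ++ [m]) v).trans hp))

lemma lex_irrefl (a : List ℕ+) : ¬ LexLt a a := fun h => (lex_not_prefix h).1 List.prefix_rfl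

lemma lex_asymm {a b : List ℕ+} (h : LexLt a b) (h' : LexLt b a) : False := by
  obtain ⟨p, u, v, n, m, hnm, rfl, hb⟩ := h
  obtain ⟨q, u', v', n', m', hnm', hb', ha'⟩ := h'
  rcases gendec (hb.symm.trans hb') with ⟨rfl, rfl⟩ | ⟨w, rfl⟩ | ⟨w, rfl⟩
  · obtain ⟨-, h2⟩ := eqdec ha' rfl
    exact (hnm.trans hnm').ne h2
  · have h1 : p ++ [m] <+: p ++ [n] ++ u := by
      rw [ha']; exact ⟨w ++ [m'] ++ v', by simp⟩
    exact hnm.ne (same_pos (List.prefix_append _ _) h1)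
  · have h1 : q ++ [m'] <+: q ++ [n'] ++ w ++ [n] ++ u := by
      rw [ha']; exact List.prefix_append _ _
    exact hnm'.ne (same_pos ⟨w ++ [n] ++ u, by simp⟩ h1)
lemma lex_cons {a b : List ℕ+} (x : ℕ+) (h : LexLt a b) : LexLt (x :: a) (x :: b) := by
  obtain ⟨p, u, v, n, m, hnm, rfl, rfl⟩ := h
  exact ⟨x :: p, u, v, n, m, hnm, by simp, by simp⟩

lemma lex_total : ∀ (a b : List ℕ+), ¬ a <+: b → ¬ b <+: a → LexLt a b ∨ LexLt b a := by
  intro a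
  induction a with
  | nil => intro b h1 _; exact absurd (List.nil_prefix) h1
  | cons x t ih =>
    intro b h1 h2
    cases b with
    | nil => exact absurd (List.nil_prefix) h2
    | cons y s =>
      rcases lt_trichotomy x y with hxy | rfl | hxy
      · exact Or.inl ⟨[], t, s, x, y, hxy, by simp, by simp⟩
      · have h1' : ¬ t <+: s := fun h => h1 (by simpa [List.cons_prefix_cons])
        have h2' : ¬ s <+: t := fun h => h2 (by simpa [List.cons_prefix_cons])
        exact (ih s h1' h2').imp (lex_cons x) (lex_cons x)
      · exact Or.inr ⟨[], s, t, y, x, hxy, by simp, by simp⟩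

lemma lex_trans {a b c : List ℕ+} (h1 : LexLt a b) (h2 : LexLt b c) : LexLt a c := by
  obtain ⟨p, u, v, n, m, hnm, rfl, hb⟩ := h1
  obtain ⟨q, u', v', n', m', hnm', hb', rfl⟩ := h2
  rcases gendec (hb.symm.trans hb') with ⟨rfl, rfl⟩ | ⟨w, rfl⟩ | ⟨w, rfl⟩
  · exact ⟨p, u, v', n, m', lt_trans hnm hnm', rfl, rfl⟩
  · exact ⟨p, u, w ++ [m'] ++ v', n, m, hnm, rfl, by simp⟩
  · exact ⟨q, w ++ [n] ++ u, v', n', m', hnm', by simp, rfl⟩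

lemma transfer1 {b c x : List ℕ+} (hbc : ¬ b <+: c) (hbx : b <+: x) :
    LexLt c b ↔ LexLt c x := by
  constructor
  · rintro ⟨p, u, v, n, m, hnm, rfl, rfl⟩
    obtain ⟨t, rfl⟩ := hbx
    exact ⟨p, u, v ++ t, n, m, hnm, rfl, by simp⟩
  · rintro ⟨p, u, v, n, m, hnm, rfl, hx⟩
    rcases le_or_gt b.length p.length with hl | hl
    · exfalso
      have hp : p <+: x := hx ▸ ⟨[m] ++ v, by simp⟩
      have hbp : b <+: p := List.prefix_of_prefix_length_le hbx hp hl
      exact hbc (hbp.trans ⟨[n] ++ u, by simp⟩)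
    · have hpb : p ++ [m] <+: b :=
        List.prefix_of_prefix_length_le (hx ▸ ⟨v, rfl⟩) hbx (by simpa using hl)
      obtain ⟨w, hw⟩ := hpb
      exact ⟨p, u, w, n, m, hnm, rfl, hw.symm⟩

lemma transfer2 {b c x : List ℕ+} (hbc : ¬ b <+: c) (hbx : b <+: x) :
    LexLt b c ↔ LexLt x c := by
  constructor
  · rintro ⟨p, u, v, n, m, hnm, hb, rfl⟩
    have hpx : p ++ [n] <+: x := by
      refine List.IsPrefix.trans ?_ hbx
      rw [hb]; exact List.prefix_append _ _
    obtain ⟨w, hw⟩ := hpx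
    exact ⟨p, w, v, n, m, hnm, hw.symm, rfl⟩
  · rintro ⟨p, u, v, n, m, hnm, hx, rfl⟩
    rcases le_or_gt b.length p.length with hl | hl
    · exfalso
      have hp : p <+: x := hx ▸ ⟨[n] ++ u, by simp⟩
      have hbp : b <+: p := List.prefix_of_prefix_length_le hbx hp hl
      exact hbc (hbp.trans ⟨[m] ++ v, by simp⟩)
    · have hpb : p ++ [n] <+: b :=
        List.prefix_of_prefix_length_le (hx ▸ ⟨u, rfl⟩) hbx (by simpa using hl)
      obtain ⟨w, hw⟩ := hpb
      exact ⟨p, w, v, n, m, hnm, hw.symm, rfl⟩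

lemma pred_finite (S : Finset (List ℕ+)) (a : List ℕ+) :
    {c ∈ (S : Set (List ℕ+)) | LexLt c a}.Finite :=
  S.finite_toSet.subset (Set.sep_subset _ _)

lemma K_lt {S : Finset (List ℕ+)} {a b' : List ℕ+} (ha : a ∈ S) (hab : LexLt a b') :
    K S a < K S b' := by
  have hss : {c ∈ (S : Set (List ℕ+)) | LexLt c a} ⊂ {c ∈ (S : Set (List ℕ+)) | LexLt c b'} := by
    constructor
    · rintro c ⟨hc, h⟩; exact ⟨hc, lex_trans h hab⟩
    · intro hsub
      exact lex_irrefl a (hsub ⟨ha, hab⟩).2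
  have := Set.ncard_lt_ncard hss (pred_finite S b')
  unfold K; omega

theorem stmt17 (X Y : Finset (List ℕ+)) (b : List ℕ+)
    (hX : IsNA X) (hY : IsNA Y) (hbX : IsPre b X) (hbY : b ∈ Y)
    (n m : ℕ) (hn : K Y b = n) (hm₁ : n ≤ m) (hm₂ : m < n + X.card) :
    ∀ a ∈ (Y \ {b}) ∪ X, K ((Y \ {b}) ∪ X) a = m → a ∈ X ∧ K X a = m - n + 1 := by
  intro a ha hKa
  classical
  have hn1 : 1 ≤ n := by unfold K at hn; omega
  -- finiteness of a Y-side part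
  have hfinY : ∀ t : List ℕ+, ({c ∈ (Y : Set (List ℕ+)) | c ≠ b ∧ LexLt c t}).Finite :=
    fun t => Y.finite_toSet.subset (fun c hc => hc.1)
  -- split of the counting set
  have hsplit : ∀ t : List ℕ+,
      {c ∈ ((((Y \ {b}) ∪ X) : Finset (List ℕ+)) : Set (List ℕ+)) | LexLt c t}.ncard
      = {c ∈ (Y : Set (List ℕ+)) | c ≠ b ∧ LexLt c t}.ncard
        + {c ∈ (X : Set (List ℕ+)) | LexLt c t}.ncard := by
    intro t
    rw [← Set.ncard_union_eq ?dj (hfinY t) (pred_finite X t)]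
    case dj =>
      rw [Set.disjoint_left]
      rintro c ⟨hcY, hcb, -⟩ ⟨hcX, -⟩
      exact hcb ((hY b hbY c hcY (hbX c hcX)).symm)
    congr 1
    ext c
    simp only [Set.mem_setOf_eq, Finset.coe_union, Finset.coe_sdiff, Finset.coe_singleton,
      Set.mem_union, Set.mem_diff, Set.mem_singleton_iff, Finset.mem_coe]
    tauto
  rcases Finset.mem_union.mp ha with haY' | haX
  · -- a ∈ Y \ {b} : contradiction
    exfalso
    obtain ⟨haY, hab'⟩ := Finset.mem_sdiff.mp haY'
    have hab : a ≠ b := by simpa using hab'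
    have h1 : ¬ a <+: b := fun h => hab (hY a haY b hbY h)
    have h2 : ¬ b <+: a := fun h => hab ((hY b hbY a haY h).symm)
    rcases lex_total a b h1 h2 with hlt | hgt
    · -- a ≺ b
      have hXempty : {c ∈ (X : Set (List ℕ+)) | LexLt c a} = ∅ := by
        ext x
        simp only [Set.mem_setOf_eq, Set.mem_empty_iff_false, iff_false, not_and, Finset.mem_coe]
        intro hxX hxa
        exact lex_asymm hlt ((transfer2 h2 (hbX x hxX)).mpr hxa)
      have hsub : {c ∈ (Y : Set (List ℕ+)) | c ≠ b ∧ LexLt c a}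
          ⊆ {c ∈ (Y : Set (List ℕ+)) | LexLt c a} := fun c hc => ⟨hc.1, hc.2.2⟩
      have hle := Set.ncard_le_ncard hsub (pred_finite Y a)
      have hKlt : K Y a < K Y b := K_lt haY hlt
      have h3 := hsplit a
      rw [hXempty] at h3
      simp only [Set.ncard_empty] at h3
      unfold K at hKa hKlt hn
      omega
    · -- b ≺ a
      have hXfull : {c ∈ (X : Set (List ℕ+)) | LexLt c a} = (X : Set (List ℕ+)) := by
        ext x
        simp only [Set.mem_setOf_eq, Finset.mem_coe, and_iff_left_iff_imp]
        intro hxX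
        exact (transfer2 h2 (hbX x hxX)).mp hgt
      have hsub : {c ∈ (Y : Set (List ℕ+)) | LexLt c b}
          ⊆ {c ∈ (Y : Set (List ℕ+)) | c ≠ b ∧ LexLt c a} := by
        rintro c ⟨hcY, hcb⟩
        exact ⟨hcY, fun h => lex_irrefl b (h ▸ hcb), lex_trans hcb hgt⟩
      have hle := Set.ncard_le_ncard hsub (hfinY a)
      have h3 := hsplit a
      rw [hXfull, Set.ncard_coe_finset] at h3
      unfold K at hKa hn
      omega
  · -- a ∈ X
    refine ⟨haX, ?_⟩
    have hYpart : {c ∈ (Y : Set (List ℕ+)) | c ≠ b ∧ LexLt c a}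
        = {c ∈ (Y : Set (List ℕ+)) | LexLt c b} := by
      ext c
      simp only [Set.mem_setOf_eq, Finset.mem_coe]
      constructor
      · rintro ⟨hcY, hcb, hca⟩
        have hbc' : ¬ b <+: c := fun h => hcb ((hY b hbY c hcY h).symm)
        exact ⟨hcY, (transfer1 hbc' (hbX a haX)).mpr hca⟩
      · rintro ⟨hcY, hcb⟩
        have hne : c ≠ b := fun h => lex_irrefl b (h ▸ hcb)
        have hbc' : ¬ b <+: c := fun h => hne ((hY b hbY c hcY h).symm)
        exact ⟨hcY, hne, (transfer1 hbc' (hbX a haX)).mp hcb⟩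
    have h3 := hsplit a
    rw [hYpart] at h3
    unfold K at hKa hn ⊢
    omega
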